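/- For any H-equivariant Lie algebra g and any Drinfel'd twist F on H, the twisted bracket is equivariant for the twisted comultiplication: writing Δ_F(h) = Σ h_{F(1)} ⊗ h_{F(2)}, one has h • [a, b]⋆ = Σ [h_{F(1)} • a, h_{F(2)} • b]⋆ for all h ∈ H and a, b ∈ g. -/

import Mathlib

open TensorProduct

noncomputable section

/-- The generic "twisted bilinear map": given `H`-actions on `A` and `B`, a bilinear map
`mu : A →ₗ B →ₗ C` and an element `T = Σ T₁ ⊗ T₂` of `H ⊗ H`, this is the bilinear map
`(a, b) ↦ Σ mu (T₁ • a) (T₂ • b)`. -/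
def twistBil {k H A B C : Type*} [CommRing k] [Ring H] [Algebra k H]
    [AddCommGroup A] [Module k A] [AddCommGroup B] [Module k B]
    [AddCommGroup C] [Module k C]
    (actA : H →ₗ[k] A →ₗ[k] A) (actB : H →ₗ[k] B →ₗ[k] B)
    (mu : A →ₗ[k] B →ₗ[k] C) (T : H ⊗[k] H) : A →ₗ[k] B →ₗ[k] C :=
  TensorProduct.curry (TensorProduct.lift mu ∘ₗ
    (TensorProduct.homTensorHomMap (RingHom.id k) A B A B ∘ₗ TensorProduct.map actA actB) T)

/-- A Drinfel'd twist on a Hopf algebra `H`: an invertible element `F` of `H ⊗ H`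
(with specified inverse `Finv`) satisfying the 2-cocycle condition
`(F ⊗ 1)·((Δ ⊗ id)(F)) = (1 ⊗ F)·((id ⊗ Δ)(F))` and the normalization condition
`(ε ⊗ id)(F) = 1 = (id ⊗ ε)(F)`. -/
def IsDrinfeldTwist {k H : Type*} [CommRing k] [Ring H] [HopfAlgebra k H]
    (F Finv : H ⊗[k] H) : Prop :=
  F * Finv = 1 ∧ Finv * F = 1 ∧
  TensorProduct.map LinearMap.id ((TensorProduct.mk k H H).flip 1) F *
      TensorProduct.assoc k H H H ((Coalgebra.comul (R := k) (A := H)).rTensor H F) =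
    ((1 : H) ⊗ₜ[k] F) * (Coalgebra.comul (R := k) (A := H)).lTensor H F ∧
  TensorProduct.lid k H ((Coalgebra.counit (R := k) (A := H)).rTensor H F) = 1 ∧
  TensorProduct.rid k H ((Coalgebra.counit (R := k) (A := H)).lTensor H F) = 1

/-- The twisted comultiplication `Δ_F(x) := F · Δ(x) · F⁻¹`, as a `k`-linear map. -/
def comulF {k H : Type*} [CommRing k] [Ring H] [HopfAlgebra k H]
    (F Finv : H ⊗[k] H) : H →ₗ[k] H ⊗[k] H :=
  LinearMap.mulRight k Finv ∘ₗ LinearMap.mulLeft k F ∘ₗ Coalgebra.comul (R := k)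

/-- The `R`-matrix `R := τ(F) · F⁻¹` of a Drinfel'd twist. -/
def Rmat {k H : Type*} [CommRing k] [Ring H] [Algebra k H]
    (F Finv : H ⊗[k] H) : H ⊗[k] H :=
  TensorProduct.comm k H H F * Finv

/-- The inverse `R⁻¹ = F · τ(F⁻¹)` of the `R`-matrix of a Drinfel'd twist; written
`R⁻¹ = Σ Rₖ ⊗ Rᵏ`. -/
def RmatInv {k H : Type*} [CommRing k] [Ring H] [Algebra k H]
    (F Finv : H ⊗[k] H) : H ⊗[k] H :=
  F * TensorProduct.comm k H H Finv

/-- `H` is cocommutative if `τ ∘ Δ = Δ`. -/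
def IsCocommutative (k H : Type*) [CommRing k] [Ring H] [HopfAlgebra k H] : Prop :=
  ∀ x : H, TensorProduct.comm k H H (Coalgebra.comul (R := k) x) = Coalgebra.comul (R := k) x

/-- For `T = Σ T₁ ⊗ T₂ ∈ H ⊗ H`, the element `T₁₂ = Σ T₁ ⊗ T₂ ⊗ 1` of `H ⊗ H ⊗ H`. -/
def leg12 {k H : Type*} [CommRing k] [Ring H] [Algebra k H]
    (T : H ⊗[k] H) : H ⊗[k] (H ⊗[k] H) :=
  TensorProduct.map LinearMap.id ((TensorProduct.mk k H H).flip 1) T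

/-- For `T = Σ T₁ ⊗ T₂ ∈ H ⊗ H`, the element `T₁₃ = Σ T₁ ⊗ 1 ⊗ T₂` of `H ⊗ H ⊗ H`. -/
def leg13 {k H : Type*} [CommRing k] [Ring H] [Algebra k H]
    (T : H ⊗[k] H) : H ⊗[k] (H ⊗[k] H) :=
  TensorProduct.map LinearMap.id (TensorProduct.mk k H H 1) T

/-- For `T ∈ H ⊗ H`, the element `T₂₃ = 1 ⊗ T` of `H ⊗ H ⊗ H`. -/
def leg23 {k H : Type*} [CommRing k] [Ring H] [Algebra k H]
    (T : H ⊗[k] H) : H ⊗[k] (H ⊗[k] H) :=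
  (1 : H) ⊗ₜ[k] T

/-- A (k-bilinear) left `H`-action: `(gh) • a = g • (h • a)` and `1 • a = a`. -/
def IsHAction {k H A : Type*} [CommRing k] [Ring H] [Algebra k H]
    [AddCommGroup A] [Module k A] (act : H →ₗ[k] A →ₗ[k] A) : Prop :=
  (∀ (g h : H) (a : A), act (g * h) a = act g (act h a)) ∧ ∀ a : A, act 1 a = a

/-- An `H`-module algebra structure on `A`: a left `H`-action such that
`h • (a·b) = Σ (h⁽¹⁾ • a)·(h⁽²⁾ • b)` and `h • 1 = ε(h)·1`. -/
def IsModuleAlgebra {k H A : Type*} [CommRing k] [Ring H] [HopfAlgebra k H]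
    [Ring A] [Algebra k A] (act : H →ₗ[k] A →ₗ[k] A) : Prop :=
  IsHAction act ∧
  (∀ (h : H) (a b : A),
    act h (a * b) = twistBil act act (LinearMap.mul k A) (Coalgebra.comul (R := k) h) a b) ∧
  ∀ h : H, act h 1 = Coalgebra.counit (R := k) h • (1 : A)

/-- The star product `a ⋆ b := Σ (f̄ᵏ • a)·(f̄ₖ • b)` on an `H`-module algebra,
as a bilinear map; here `Finv = Σ f̄ᵏ ⊗ f̄ₖ` is the inverse of the twist. -/
def starBil {k H A : Type*} [CommRing k] [Ring H] [Algebra k H]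
    [Ring A] [Algebra k A] (act : H →ₗ[k] A →ₗ[k] A) (Finv : H ⊗[k] H) :
    A →ₗ[k] A →ₗ[k] A :=
  twistBil act act (LinearMap.mul k A) Finv

/-- The Lie bracket of a Lie algebra `g` over `k`, as a bilinear map. -/
def lieBil (k g : Type*) [CommRing k] [LieRing g] [LieAlgebra k g] : g →ₗ[k] g →ₗ[k] g :=
  LinearMap.mk₂ k (fun x y => ⁅x, y⁆) add_lie smul_lie lie_add lie_smul

/-- An `H`-equivariant Lie algebra structure: a left `H`-action on the Lie algebra `g`
such that `h • ⁅a, b⁆ = Σ ⁅h⁽¹⁾ • a, h⁽²⁾ • b⁆`. -/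
def IsEquivLieAlgebra {k H g : Type*} [CommRing k] [Ring H] [HopfAlgebra k H]
    [LieRing g] [LieAlgebra k g] (act : H →ₗ[k] g →ₗ[k] g) : Prop :=
  IsHAction act ∧
  ∀ (h : H) (a b : g),
    act h ⁅a, b⁆ = twistBil act act (lieBil k g) (Coalgebra.comul (R := k) h) a b

/-- The twisted bracket `[a, b]⋆ := Σ ⁅f̄ᵏ • a, f̄ₖ • b⁆` on an `H`-equivariant Lie algebra. -/
def lieStar {k H g : Type*} [CommRing k] [Ring H] [Algebra k H]
    [LieRing g] [LieAlgebra k g] (act : H →ₗ[k] g →ₗ[k] g) (Finv : H ⊗[k] H) :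
    g →ₗ[k] g →ₗ[k] g :=
  twistBil act act (lieBil k g) Finv

/-- The twisted antipode `S_F(x) := u · S(x) · u⁻¹` with `u := Σ fᵏ·S(fₖ)` and
`u⁻¹ = Σ S(f̄ᵏ)·f̄ₖ`. -/
def antipodeF {k H : Type*} [CommRing k] [Ring H] [HopfAlgebra k H]
    (F Finv : H ⊗[k] H) : H →ₗ[k] H :=
  LinearMap.mulRight k
      (LinearMap.mul' k H ((HopfAlgebra.antipode (R := k)).rTensor H Finv)) ∘ₗ
    LinearMap.mulLeft k
      (LinearMap.mul' k H ((HopfAlgebra.antipode (R := k)).lTensor H F)) ∘ₗ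
    HopfAlgebra.antipode (R := k)

end

section twistBil

variable {k H A B C : Type*} [CommRing k] [Ring H] [Algebra k H]
    [AddCommGroup A] [Module k A] [AddCommGroup B] [Module k B]
    [AddCommGroup C] [Module k C]
    {actA : H →ₗ[k] A →ₗ[k] A} {actB : H →ₗ[k] B →ₗ[k] B} {mu : A →ₗ[k] B →ₗ[k] C}

@[simp]
lemma twistBil_tmul (t₁ t₂ : H) (a : A) (b : B) :
    twistBil actA actB mu (t₁ ⊗ₜ[k] t₂) a b = mu (actA t₁ a) (actB t₂ b) := by
  simp [twistBil]

@[simp]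
lemma twistBil_zero (a : A) (b : B) : twistBil actA actB mu 0 a b = 0 := by
  simp [twistBil]

@[simp]
lemma twistBil_add (S T : H ⊗[k] H) (a : A) (b : B) :
    twistBil actA actB mu (S + T) a b
      = twistBil actA actB mu S a b + twistBil actA actB mu T a b := by
  simp [twistBil]

variable (hA : ∀ (g h : H) (a : A), actA (g * h) a = actA g (actA h a))
    (hB : ∀ (g h : H) (b : B), actB (g * h) b = actB g (actB h b))
include hA hB

lemma twistBil_twistBil (S T : H ⊗[k] H) (a : A) (b : B) :
    twistBil actA actB (twistBil actA actB mu S) T a b = twistBil actA actB mu (S * T) a b := by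
  induction T using TensorProduct.induction_on with
  | zero => simp
  | add T T' hT hT' => simp [mul_add, hT, hT']
  | tmul t₁ t₂ =>
    induction S using TensorProduct.induction_on with
    | zero => simp
    | add S S' hS hS' => simp_all [add_mul]
    | tmul s₁ s₂ => simp [hA, hB]

lemma act_twistBil_eq_twistBil_mul {actC : H →ₗ[k] C →ₗ[k] C} {h : H} {D : H ⊗[k] H}
    (hmu : ∀ a b, actC h (mu a b) = twistBil actA actB mu D a b)
    (T : H ⊗[k] H) (a : A) (b : B) :
    actC h (twistBil actA actB mu T a b) = twistBil actA actB mu (D * T) a b := by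
  induction T using TensorProduct.induction_on with
  | zero => simp
  | add T T' hT hT' => simp [mul_add, hT, hT']
  | tmul t₁ t₂ =>
    rw [twistBil_tmul, hmu, ← twistBil_tmul (mu := twistBil actA actB mu D),
      twistBil_twistBil hA hB]

end twistBil

/-- For any `H`-equivariant Lie algebra `g` and any Drinfel'd twist `F` on `H`,
the twisted bracket is equivariant for the twisted comultiplication:
`h • [a, b]⋆ = Σ [h_{F(1)} • a, h_{F(2)} • b]⋆`. -/
theorem act_lieStar {k H g : Type*} [CommRing k] [Ring H] [HopfAlgebra k H]
    [LieRing g] [LieAlgebra k g] (act : H →ₗ[k] g →ₗ[k] g) (hact : IsEquivLieAlgebra act)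
    (F Finv : H ⊗[k] H) (hF : IsDrinfeldTwist F Finv) :
    ∀ (h : H) (a b : g), act h (lieStar act Finv a b)
      = twistBil act act (lieStar act Finv) (comulF F Finv h) a b := by
  intro h a b
  have hmul := hact.1.1
  calc act h (lieStar act Finv a b)
      = twistBil act act (lieBil k g) (Coalgebra.comul h * Finv) a b :=
        act_twistBil_eq_twistBil_mul hmul hmul (hact.2 h) Finv a b
    _ = twistBil act act (lieBil k g) (Finv * comulF F Finv h) a b := by
        simp only [comulF, LinearMap.comp_apply, LinearMap.mulLeft_apply,
          LinearMap.mulRight_apply, ← mul_assoc, hF.2.1, one_mul]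
    _ = twistBil act act (lieStar act Finv) (comulF F Finv h) a b :=
        (twistBil_twistBil hmul hmul Finv _ a b).symm
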